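/- Let A be an alternating algebra over a field K satisfying z·(x·y) = λ·(y·(z·x)) + μ·(x·(y·z)) for some fixed λ, μ ∈ K. If μ ≠ -1, then A satisfies x·(x·y) = 0 for all x, y, and hence A is antiassociative. -/
import Mathlib


variable {K : Type*} [Field K] {A : Type*} [AddCommGroup A] [Module K A]

theorem stmt19 (mul : A →ₗ[K] A →ₗ[K] A) (lam mu : K)
    (halt : ∀ x : A, mul x x = 0)
    (hlaw : ∀ x y z : A, mul z (mul x y) =
      lam • mul y (mul z x) + mu • mul x (mul y z))
    (hmu : mu ≠ -1) :
    (∀ x y : A, mul x (mul x y) = 0) ∧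
    (∀ x y z : A, mul x (mul y z) = -(mul (mul x y) z)) := by
  have hanti : ∀ x y : A, mul x y = -(mul y x) := by
    intro x y
    have h := halt (x + y)
    simp only [map_add, LinearMap.add_apply, halt] at h
    linear_combination (norm := abel) h
  have h1 : ∀ x y : A, mul x (mul x y) = 0 := by
    intro x y
    have h := hlaw x y x
    rw [halt, map_zero, smul_zero, zero_add, hanti y x, map_neg, smul_neg] at h
    have : (1 + mu) • mul x (mul x y) = 0 := by
      linear_combination (norm := module) h
    have hne : (1 + mu) ≠ 0 := fun hc => hmu (by linear_combination hc)
    exact (smul_eq_zero.mp this).resolve_left hne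
  refine ⟨h1, fun x y z => ?_⟩
  have hlin : ∀ a b c : A, mul a (mul b c) = -(mul b (mul a c)) := by
    intro a b c
    have h := h1 (a + b) c
    simp only [map_add, LinearMap.add_apply, h1] at h
    linear_combination (norm := abel) h
  rw [hanti (mul x y) z, neg_neg, hlin z x y, hanti z y, map_neg, neg_neg]
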